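/- arXiv:0710.4561 — 4 statements merged into one kernel-verified Lean document; each statement's English description precedes it below -/
import Mathlib

section
/- Let p be an element of the free noncommutative algebra ℂ⟨x,y⟩ on two generators. If for every positive integer n and every pair of matrices S, T ∈ Mₙ(ℂ) the evaluation of p at (S, T) — i.e. the image of p under the unique ℂ-algebra homomorphism ℂ⟨x,y⟩ → Mₙ(ℂ) sending x ↦ S and y ↦ T — is the zero matrix, then p = 0. Equivalently, no nonzero noncommutative polynomial in two variables over ℂ vanishes identically on all pairs of complex square matrices of all sizes. -/
/-!
Let `d` bound the lengths of the words occurring in `p`. Letting each generator act on the span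
of the words of length at most `d` by prepending itself (and killing words that would become too
long), the monomial `w` sends the empty word to `w` whenever `|w| ≤ d`. So the evaluation of `p` at
these operators, applied to the empty word, has the coefficients of `p` as its coordinates, and
cannot vanish unless `p = 0`.
-/

open Matrix

namespace FreeAlgebra

variable {R X : Type*} [CommSemiring R]

theorem basisFreeMonoid_apply (m : FreeMonoid X) :
    basisFreeMonoid R X m = (m.toList.map (ι R)).prod := by
  simp [basisFreeMonoid, equivMonoidAlgebraFreeMonoid, FreeMonoid.lift_apply]

theorem lift_basisFreeMonoid {A : Type*} [Semiring A] [Algebra R A] (f : X → A)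
    (m : FreeMonoid X) :
    lift R f (basisFreeMonoid R X m) = (m.toList.map f).prod := by
  simp [basisFreeMonoid_apply, map_list_prod, Function.comp_def]

end FreeAlgebra

abbrev BoundedWord (X : Type*) (d : ℕ) := {l : List X // l.length ≤ d}

namespace BoundedWord
variable {R X : Type*} {d : ℕ}

instance [Finite X] : Finite (BoundedWord X d) := (List.finite_length_le X d).to_subtype

noncomputable instance [Finite X] : Fintype (BoundedWord X d) := Fintype.ofFinite _

variable [DecidableEq X] [CommSemiring R]

def indicator (m : List X) : BoundedWord X d → R := fun w => if w.1 = m then 1 else 0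

def prependMatrix (d : ℕ) (x : X) : Matrix (BoundedWord X d) (BoundedWord X d) R :=
  fun w w' => if w.1 = x :: w'.1 then 1 else 0

variable [Fintype X]

theorem prependMatrix_mulVec_indicator (x : X) (m : List X) :
    prependMatrix (R := R) d x *ᵥ indicator m = indicator (x :: m) := by
  ext w
  simp only [mulVec, dotProduct, prependMatrix, indicator, mul_ite, mul_one, mul_zero]
  by_cases hm : m.length ≤ d
  · rw [Finset.sum_eq_single ⟨m, hm⟩]
    · simp
    · intro w' _ hw'
      simp [Subtype.ext_iff.not.mp hw']
    · simp
  · have hm' (w' : BoundedWord X d) : w'.1 ≠ m := fun h => hm (h ▸ w'.2)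
    have hxm : w.1 ≠ x :: m := fun h => hm (Nat.le_of_lt (by simpa [h] using w.2))
    simp [hm', hxm]

theorem prod_map_prependMatrix_mulVec_indicator_nil (m : List X) :
    (m.map (prependMatrix (R := R) d)).prod *ᵥ indicator [] = indicator m := by
  induction m with
  | nil => simp
  | cons x m ih => rw [List.map_cons, List.prod_cons, ← mulVec_mulVec, ih,
      prependMatrix_mulVec_indicator]

open FreeAlgebra in
theorem lift_prependMatrix_mulVec_indicator_nil_apply (p : FreeAlgebra R X)
    (w : BoundedWord X d) :
    (lift R (prependMatrix d) p *ᵥ indicator []) w =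
      (basisFreeMonoid R X).repr p (FreeMonoid.ofList w.1) := by
  obtain ⟨c, rfl⟩ := (basisFreeMonoid R X).repr.symm.surjective p
  rw [LinearEquiv.apply_symm_apply]
  induction c using Finsupp.induction_linear with
  | zero => simp
  | add c c' hc hc' =>
    rw [map_add, map_add, add_mulVec, Pi.add_apply, hc, hc', Finsupp.add_apply]
  | single m r =>
    classical
    simp only [Module.Basis.repr_symm_apply, Finsupp.linearCombination_single, map_smul,
      lift_basisFreeMonoid, smul_mulVec, prod_map_prependMatrix_mulVec_indicator_nil,
      Pi.smul_apply, indicator, smul_eq_mul, mul_ite, mul_one, mul_zero]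
    rw [Finsupp.single_apply]
    exact if_congr eq_comm rfl rfl

open FreeAlgebra in
theorem eq_zero_of_lift_prependMatrix_eq_zero {p : FreeAlgebra R X}
    (hdeg : ∀ m ∈ ((basisFreeMonoid R X).repr p).support, m.length ≤ d)
    (hp : lift R (prependMatrix (R := R) d) p = 0) : p = 0 := by
  refine (basisFreeMonoid R X).ext_elem_iff.mpr fun m => ?_
  rw [map_zero, Finsupp.zero_apply]
  by_contra hm
  have := lift_prependMatrix_mulVec_indicator_nil_apply p ⟨m.toList, hdeg m (by simpa using hm)⟩
  rw [hp, zero_mulVec, Pi.zero_apply] at this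
  exact hm this.symm

end BoundedWord

namespace FreeAlgebra

variable {R X ι : Type*} [CommSemiring R] [Fintype ι] [DecidableEq ι]

theorem lift_eq_zero_of_forall_fin {n : ℕ} (e : ι ≃ Fin n) {p : FreeAlgebra R X}
    (h : ∀ f : X → Matrix (Fin n) (Fin n) R, lift R f p = 0) (f : X → Matrix ι ι R) :
    lift R f p = 0 := by
  let φ := reindexAlgEquiv R R e
  have hφ : φ.toAlgHom.comp (lift R f) = lift R (φ ∘ f) := by ext; simp
  rw [← map_eq_zero_iff φ φ.injective]
  simpa using congr($hφ p).trans (h _)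

end FreeAlgebra

open BoundedWord in
/-- No nonzero noncommutative polynomial in two variables over ℂ vanishes
identically on all pairs of complex square matrices of all sizes. -/
theorem freeAlgebra_eq_zero_of_vanishing_on_all_matrices
    (p : FreeAlgebra ℂ (Fin 2))
    (h : ∀ n : ℕ, 0 < n → ∀ S T : Matrix (Fin n) (Fin n) ℂ,
      FreeAlgebra.lift ℂ (![S, T]) p = 0) :
    p = 0 := by
  set d := ((FreeAlgebra.basisFreeMonoid ℂ (Fin 2)).repr p).support.sup FreeMonoid.length
  refine eq_zero_of_lift_prependMatrix_eq_zero (d := d) (fun m hm => Finset.le_sup hm) ?_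
  refine FreeAlgebra.lift_eq_zero_of_forall_fin (Fintype.equivFin _) (fun f => ?_) _
  have hf : ![f 0, f 1] = f := by ext i : 1; fin_cases i <;> rfl
  simpa [hf] using h _ (Fintype.card_pos_iff.mpr ⟨⟨[], Nat.zero_le d⟩⟩) (f 0) (f 1)
end

section
/- (Composition law t_a ∘ t_b = t_{ab}.) Let A be an associative unital ring and let y, P, Q, R, S, P₁, Q₁, R₁, S₁ ∈ A. Assume that yR + S is a unit of A and that y(PR₁ + RS₁) + (QR₁ + SS₁) is a unit of A. Set y₁ = (yR + S)⁻¹(yP + Q). Then y₁R₁ + S₁ is a unit of A, and (y₁R₁ + S₁)⁻¹(y₁P₁ + Q₁) = (y(PR₁ + RS₁) + (QR₁ + SS₁))⁻¹ · (y(PP₁ + RQ₁) + (QP₁ + SQ₁)). -/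
/-! Multiplying by the denominator `u = y*R + S` of `y₁` clears it: `u * y₁ = y*P + Q`, so
`u * (y₁*R₁ + S₁)` and `u * (y₁*P₁ + Q₁)` are the denominator and numerator attached to the
product matrix. Hence `y₁*R₁ + S₁ = u⁻¹ * v` with `v` the new denominator, and `u` cancels in
`(u⁻¹ * v)⁻¹ * (y₁*P₁ + Q₁) = v⁻¹ * u * (y₁*P₁ + Q₁)`. -/

theorem mul_affine_eq_of_mul_eq {A : Type*} [Ring A] {y P Q R S y₁ : A}
    (h : (y * R + S) * y₁ = y * P + Q) (P₁ Q₁ : A) :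
    (y * R + S) * (y₁ * P₁ + Q₁) = y * (P * P₁ + R * Q₁) + (Q * P₁ + S * Q₁) := by
  rw [mul_add, ← mul_assoc, h]
  simp only [mul_add, add_mul, mul_assoc]
  abel

theorem Ring.isUnit_and_inverse_mul_of_mul_eq {M : Type*} [MonoidWithZero M] {u x v : M}
    (hu : IsUnit u) (hv : IsUnit v) (h : u * x = v) (z : M) :
    IsUnit x ∧ Ring.inverse x * z = Ring.inverse v * (u * z) := by
  have hx : x = Ring.inverse u * v := by rw [← h, Ring.inverse_mul_cancel_left _ _ hu]
  have hxu : IsUnit x := hx ▸ (isUnit_ringInverse.2 hu).mul hv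
  refine ⟨hxu, ?_⟩
  rw [Ring.inverse_mul_eq_iff_eq_mul _ _ _ hxu, hx, mul_assoc,
    Ring.mul_inverse_cancel_left _ _ hv, Ring.inverse_mul_cancel_left _ _ hu]

/-- Composition law `t_a ∘ t_b = t_{ab}` for the noncommutative fractional-linear
actions: with `y₁ = (y*R + S)⁻¹ * (y*P + Q)`, the element `y₁*R₁ + S₁` is a unit,
and `(y₁*R₁ + S₁)⁻¹ * (y₁*P₁ + Q₁)` equals the single fractional-linear expression
attached to the product matrix. -/
theorem t_comp_law {A : Type*} [Ring A]
    (y P Q R S P₁ Q₁ R₁ S₁ : A)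
    (h₁ : IsUnit (y * R + S))
    (h₂ : IsUnit (y * (P * R₁ + R * S₁) + (Q * R₁ + S * S₁)))
    (y₁ : A) (hy₁ : y₁ = Ring.inverse (y * R + S) * (y * P + Q)) :
    IsUnit (y₁ * R₁ + S₁) ∧
    Ring.inverse (y₁ * R₁ + S₁) * (y₁ * P₁ + Q₁) =
      Ring.inverse (y * (P * R₁ + R * S₁) + (Q * R₁ + S * S₁)) *
        (y * (P * P₁ + R * Q₁) + (Q * P₁ + S * Q₁)) := by
  have hy₁_cleared : (y * R + S) * y₁ = y * P + Q := by
    rw [hy₁, Ring.mul_inverse_cancel_left _ _ h₁]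
  rw [← mul_affine_eq_of_mul_eq hy₁_cleared P₁ Q₁]
  exact Ring.isUnit_and_inverse_mul_of_mul_eq h₁ h₂ (mul_affine_eq_of_mul_eq hy₁_cleared R₁ S₁) _
end

section
/- (Closure of the set of pivots under products.) Let A be an associative unital ℂ-algebra and V ⊆ A a ℂ-linear subspace with 1 ∈ V. Suppose M is a k×k matrix with entries in V admitting an admissible decomposition with pivot Δ₁, and N is an l×l matrix with entries in V admitting an admissible decomposition with pivot Δ₂. Then there exists a (k+l)×(k+l) matrix P with all entries in V admitting an admissible decomposition with pivot −Δ₂Δ₁. -/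
/-- A square matrix `M` of size `k` over `A` admits an *admissible decomposition*
with pivot `Δ` if there exist a lower triangular matrix `U` whose diagonal entries
are units with last diagonal entry `1`, and an upper triangular matrix `T` with
diagonal entries `(1, …, 1, Δ)`, such that `U * M = T`. -/
def HasAdmissibleDecomp {A : Type*} [Ring A] {k : ℕ}
    (M : Matrix (Fin k) (Fin k) A) (Δ : A) : Prop :=
  ∃ U T : Matrix (Fin k) (Fin k) A,
    (∀ i j : Fin k, (i : ℕ) < (j : ℕ) → U i j = 0) ∧
    (∀ i : Fin k, IsUnit (U i i)) ∧
    (∀ i : Fin k, (i : ℕ) = k - 1 → U i i = 1) ∧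
    (∀ i j : Fin k, (j : ℕ) < (i : ℕ) → T i j = 0) ∧
    (∀ i : Fin k, (i : ℕ) < k - 1 → T i i = 1) ∧
    (∀ i : Fin k, (i : ℕ) = k - 1 → T i i = Δ) ∧
    U * M = T

/-!
Index `P` by `Fin k ⊕ Fin l` and let `P = diag(M, N) + E`, where `E` has a single `1` in the last
row of the `M`-block and the last column of the `N`-block. Order the rows as: the leading rows of
`M`, those of `N`, the last row of `M`, the last row of `N`; order the columns in the same way,
except that the last columns of `M` and `N` trade places. If `U₁ M = T₁` and `U₂ N = T₂` are the
given decompositions, multiplying by `diag(U₁, U₂)` turns `P` into `diag(T₁, T₂) + E`, whose last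
two rows are `Δ₁ e_M + e_N` and `Δ₂ e_N`, with `e_M`, `e_N` the last columns of the two blocks.
Subtracting `Δ₂` times the first of these rows from the second leaves `-Δ₂Δ₁ e_M`, so in the chosen
orders the result is upper triangular with diagonal `(1, …, 1, -Δ₂Δ₁)`.
-/

open Matrix

section Triangular

variable {ι κ A : Type*} [Semiring A] [Fintype ι] [DecidableEq ι] [LinearOrder ι] [DecidableEq κ]
  {ω : ι}

theorem Matrix.mul_single_of_isTop {U : Matrix ι ι A} (hU : ∀ i j, i < j → U i j = 0)
    (hω : IsTop ω) (hUω : U ω ω = 1) (j : κ) (c : A) :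
    U * single ω j c = single ω j c := by
  ext a b
  by_cases hb : b = j
  · subst hb
    rcases eq_or_lt_of_le (hω a) with rfl | ha
    · simp [hUω]
    · simp [hU a ω ha, single_apply_of_row_ne ha.ne']
  · simp [mul_single_apply_of_ne _ _ _ _ _ hb, single_apply_of_col_ne _ _ (Ne.symm hb)]

theorem Matrix.single_mul_of_isTop {T : Matrix ι ι A} (hT : ∀ i j, j < i → T i j = 0)
    (hω : IsTop ω) (i : κ) (c : A) :
    single i ω c * T = single i ω (c * T ω ω) := by
  ext a b
  by_cases ha : a = i
  · subst ha
    rcases eq_or_lt_of_le (hω b) with rfl | hb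
    · simp
    · simp [hT ω b hb, single_apply_of_col_ne _ _ hb.ne']
  · simp [single_mul_apply_of_ne _ _ _ _ _ ha, single_apply_of_row_ne (Ne.symm ha)]

end Triangular

theorem hasAdmissibleDecomp_submatrix {ι κ A : Type*} [Ring A] [Fintype ι] {n : ℕ}
    (r : ι ≃ Fin n) (c : κ ≃ Fin n) {M : Matrix ι κ A} {Δ : A} (U : Matrix ι ι A)
    (hU : ∀ a b, r a < r b → U a b = 0) (hU_unit : ∀ a, IsUnit (U a a))
    (hU_last : ∀ a, (r a : ℕ) = n - 1 → U a a = 1)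
    (hT : ∀ a b, c b < r a → (U * M) a b = 0)
    (hT_one : ∀ a b, r a = c b → (r a : ℕ) < n - 1 → (U * M) a b = 1)
    (hT_last : ∀ a b, (r a : ℕ) = n - 1 → (c b : ℕ) = n - 1 → (U * M) a b = Δ) :
    HasAdmissibleDecomp (M.submatrix r.symm c.symm) Δ := by
  refine ⟨U.submatrix r.symm r.symm, (U * M).submatrix r.symm c.symm,
    fun i j h => hU _ _ (by simpa using h), fun i => hU_unit _,
    fun i h => hU_last _ (by simpa using h), fun i j h => hT _ _ (by simpa using h),
    fun i h => hT_one _ _ (by simp) (by simpa using h),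
    fun i h => hT_last _ _ (by simpa using h) (by simpa using h), submatrix_mul_equiv _ _ _ _ _⟩

namespace PivotProduct

variable {A : Type*} [Ring A] {m n : ℕ}

def rowPos (m n : ℕ) : Fin (m + 1) ⊕ Fin (n + 1) → Fin (m + 1 + (n + 1))
  | .inl i => ⟨if (i : ℕ) < m then i else m + n, by split_ifs <;> omega⟩
  | .inr j => ⟨if (j : ℕ) < n then m + j else m + n + 1, by split_ifs <;> omega⟩

def colPos (m n : ℕ) : Fin (m + 1) ⊕ Fin (n + 1) → Fin (m + 1 + (n + 1))
  | .inl i => ⟨if (i : ℕ) < m then i else m + n + 1, by split_ifs <;> omega⟩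
  | .inr j => ⟨if (j : ℕ) < n then m + j else m + n, by split_ifs <;> omega⟩

theorem rowPos_injective : Function.Injective (rowPos m n) := by
  rintro (i | i) (j | j) h <;> simp only [rowPos, Fin.ext_iff, Sum.inl.injEq, Sum.inr.injEq,
    reduceCtorEq] at h ⊢ <;> split_ifs at h <;> omega

theorem colPos_injective : Function.Injective (colPos m n) := by
  rintro (i | i) (j | j) h <;> simp only [colPos, Fin.ext_iff, Sum.inl.injEq, Sum.inr.injEq,
    reduceCtorEq] at h ⊢ <;> split_ifs at h <;> omega

noncomputable def rowEquiv (m n : ℕ) : Fin (m + 1) ⊕ Fin (n + 1) ≃ Fin (m + 1 + (n + 1)) :=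
  .ofBijective _ ((Fintype.bijective_iff_injective_and_card _).2 ⟨rowPos_injective, by simp⟩)

noncomputable def colEquiv (m n : ℕ) : Fin (m + 1) ⊕ Fin (n + 1) ≃ Fin (m + 1 + (n + 1)) :=
  .ofBijective _ ((Fintype.bijective_iff_injective_and_card _).2 ⟨colPos_injective, by simp⟩)

def matrix (M : Matrix (Fin (m + 1)) (Fin (m + 1)) A)
    (N : Matrix (Fin (n + 1)) (Fin (n + 1)) A) :
    Matrix (Fin (m + 1) ⊕ Fin (n + 1)) (Fin (m + 1) ⊕ Fin (n + 1)) A :=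
  fromBlocks M (single (Fin.last m) (Fin.last n) 1) 0 N

def lowerFactor (U₁ : Matrix (Fin (m + 1)) (Fin (m + 1)) A)
    (U₂ : Matrix (Fin (n + 1)) (Fin (n + 1)) A) (Δ₂ : A) :
    Matrix (Fin (m + 1) ⊕ Fin (n + 1)) (Fin (m + 1) ⊕ Fin (n + 1)) A :=
  fromBlocks U₁ 0 (single (Fin.last n) (Fin.last m) (-Δ₂) * U₁) U₂

def upperFactor (T₁ : Matrix (Fin (m + 1)) (Fin (m + 1)) A)
    (T₂ : Matrix (Fin (n + 1)) (Fin (n + 1)) A) (Δ₁ Δ₂ : A) :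
    Matrix (Fin (m + 1) ⊕ Fin (n + 1)) (Fin (m + 1) ⊕ Fin (n + 1)) A :=
  fromBlocks T₁ (single (Fin.last m) (Fin.last n) 1)
    (single (Fin.last n) (Fin.last m) (-(Δ₂ * Δ₁)))
    (T₂ + single (Fin.last n) (Fin.last n) (-Δ₂))

variable {U₁ M T₁ : Matrix (Fin (m + 1)) (Fin (m + 1)) A}
  {U₂ N T₂ : Matrix (Fin (n + 1)) (Fin (n + 1)) A} {Δ₁ Δ₂ : A}

theorem matrix_apply_mem {S : Type*} [SetLike S A] [ZeroMemClass S A] {V : S}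
    (hV1 : (1 : A) ∈ V) (hMV : ∀ i j, M i j ∈ V) (hNV : ∀ i j, N i j ∈ V)
    (a b : Fin (m + 1) ⊕ Fin (n + 1)) :
    matrix M N a b ∈ V := by
  rcases a with i | i <;> rcases b with j | j
  · exact hMV i j
  · simp only [matrix, fromBlocks_apply₁₂, single_apply]
    split_ifs
    exacts [hV1, zero_mem V]
  · exact zero_mem V
  · exact hNV i j

theorem lowerFactor_mul_matrix (hU₁ : ∀ i j, i < j → U₁ i j = 0)
    (hU₁_last : U₁ (Fin.last m) (Fin.last m) = 1) (hT₁ : ∀ i j, j < i → T₁ i j = 0)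
    (hT₁_last : T₁ (Fin.last m) (Fin.last m) = Δ₁) (hM : U₁ * M = T₁) (hN : U₂ * N = T₂) :
    lowerFactor U₁ U₂ Δ₂ * matrix M N = upperFactor T₁ T₂ Δ₁ Δ₂ := by
  have h₁₂ :
      U₁ * single (Fin.last m) (Fin.last n) (1 : A) = single (Fin.last m) (Fin.last n) 1 :=
    mul_single_of_isTop hU₁ Fin.le_last hU₁_last _ _
  have h₂₁ : single (Fin.last n) (Fin.last m) (-Δ₂) * U₁ * M =
      single (Fin.last n) (Fin.last m) (-(Δ₂ * Δ₁)) := by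
    rw [Matrix.mul_assoc, hM, single_mul_of_isTop hT₁ Fin.le_last, hT₁_last, neg_mul]
  have h₂₂ : single (Fin.last n) (Fin.last m) (-Δ₂) * U₁ *
      single (Fin.last m) (Fin.last n) (1 : A) = single (Fin.last n) (Fin.last n) (-Δ₂) := by
    rw [single_mul_mul_single, hU₁_last, mul_one, mul_one]
  simp only [lowerFactor, matrix, upperFactor, fromBlocks_multiply, h₁₂, h₂₁, h₂₂, hM, hN,
    Matrix.mul_zero, Matrix.zero_mul, add_zero, add_comm T₂]

theorem lowerFactor_eq_zero_of_lt (hU₁ : ∀ i j, i < j → U₁ i j = 0)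
    (hU₂ : ∀ i j, i < j → U₂ i j = 0) :
    ∀ a b, rowEquiv m n a < rowEquiv m n b → lowerFactor U₁ U₂ Δ₂ a b = 0 := by
  rintro (i | i) (j | j) h <;>
    simp only [rowEquiv, Equiv.ofBijective_apply, Fin.lt_def, rowPos] at h <;>
    simp only [lowerFactor, fromBlocks_apply₁₁, fromBlocks_apply₁₂, fromBlocks_apply₂₁,
      fromBlocks_apply₂₂, Matrix.zero_apply]
  · exact hU₁ i j (by split_ifs at h <;> omega)
  · refine single_mul_apply_of_ne _ _ _ _ _ (Fin.ne_of_val_ne ?_) _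
    simp only [Fin.val_last]
    split_ifs at h <;> omega
  · exact hU₂ i j (by split_ifs at h <;> omega)

theorem isUnit_lowerFactor_apply_self (hU₁_unit : ∀ i, IsUnit (U₁ i i))
    (hU₂_unit : ∀ i, IsUnit (U₂ i i)) (a : Fin (m + 1) ⊕ Fin (n + 1)) :
    IsUnit (lowerFactor U₁ U₂ Δ₂ a a) := by
  rcases a with i | i
  · exact hU₁_unit i
  · exact hU₂_unit i

theorem lowerFactor_apply_self_of_last (hU₂_last : U₂ (Fin.last n) (Fin.last n) = 1) :
    ∀ a, (rowEquiv m n a : ℕ) = m + 1 + (n + 1) - 1 → lowerFactor U₁ U₂ Δ₂ a a = 1 := by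
  rintro (i | i) h <;> simp only [rowEquiv, Equiv.ofBijective_apply, rowPos] at h
  · split_ifs at h <;> omega
  · obtain rfl : i = Fin.last n := Fin.ext (by rw [Fin.val_last]; split_ifs at h <;> omega)
    exact hU₂_last

theorem upperFactor_eq_zero_of_lt (hT₁ : ∀ i j, j < i → T₁ i j = 0)
    (hT₂ : ∀ i j, j < i → T₂ i j = 0) (hT₂_last : T₂ (Fin.last n) (Fin.last n) = Δ₂) :
    ∀ a b, colEquiv m n b < rowEquiv m n a → upperFactor T₁ T₂ Δ₁ Δ₂ a b = 0 := by
  rintro (i | i) (j | j) h <;>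
    simp only [rowEquiv, colEquiv, Equiv.ofBijective_apply, Fin.lt_def, rowPos, colPos] at h <;>
    simp only [upperFactor, fromBlocks_apply₁₁, fromBlocks_apply₁₂, fromBlocks_apply₂₁,
      fromBlocks_apply₂₂, Matrix.add_apply, single_apply, Fin.ext_iff, Fin.val_last]
  · exact hT₁ i j (by split_ifs at h <;> omega)
  · rw [if_neg (by split_ifs at h <;> omega)]
  · rw [if_neg (by split_ifs at h <;> omega)]
  · split_ifs with hij
    · obtain ⟨rfl, rfl⟩ : i = Fin.last n ∧ j = Fin.last n :=
        ⟨Fin.ext hij.1.symm, Fin.ext hij.2.symm⟩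
      rw [hT₂_last, add_neg_cancel]
    · rw [add_zero, hT₂ i j (by split_ifs at h <;> omega)]

theorem upperFactor_eq_one (hT₁_one : ∀ i : Fin (m + 1), (i : ℕ) < m → T₁ i i = 1)
    (hT₂_one : ∀ i : Fin (n + 1), (i : ℕ) < n → T₂ i i = 1) :
    ∀ a b, rowEquiv m n a = colEquiv m n b → (rowEquiv m n a : ℕ) < m + 1 + (n + 1) - 1 →
      upperFactor T₁ T₂ Δ₁ Δ₂ a b = 1 := by
  rintro (i | i) (j | j) h h' <;>
    simp only [rowEquiv, colEquiv, Equiv.ofBijective_apply, Fin.ext_iff, rowPos, colPos]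
      at h h' <;>
    simp only [upperFactor, fromBlocks_apply₁₁, fromBlocks_apply₁₂, fromBlocks_apply₂₁,
      fromBlocks_apply₂₂, Matrix.add_apply, single_apply, Fin.ext_iff, Fin.val_last]
  · obtain rfl : i = j := Fin.ext (by split_ifs at h <;> omega)
    exact hT₁_one i (by split_ifs at h <;> omega)
  · rw [if_pos (by split_ifs at h h' <;> omega)]
  · split_ifs at h h' <;> omega
  · obtain rfl : i = j := Fin.ext (by split_ifs at h <;> omega)
    rw [if_neg (by split_ifs at h h' <;> omega), add_zero]
    exact hT₂_one i (by split_ifs at h <;> omega)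

theorem upperFactor_apply_of_last :
    ∀ a b, (rowEquiv m n a : ℕ) = m + 1 + (n + 1) - 1 →
      (colEquiv m n b : ℕ) = m + 1 + (n + 1) - 1 →
      upperFactor T₁ T₂ Δ₁ Δ₂ a b = -(Δ₂ * Δ₁) := by
  rintro (i | i) (j | j) h h' <;>
    simp only [rowEquiv, colEquiv, Equiv.ofBijective_apply, rowPos, colPos] at h h'
  · split_ifs at h <;> omega
  · split_ifs at h <;> omega
  · obtain ⟨rfl, rfl⟩ : i = Fin.last n ∧ j = Fin.last m :=
      ⟨Fin.ext (by rw [Fin.val_last]; split_ifs at h <;> omega),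
        Fin.ext (by rw [Fin.val_last]; split_ifs at h' <;> omega)⟩
    exact single_apply_same _ _ _
  · split_ifs at h' <;> omega

theorem hasAdmissibleDecomp (hM : HasAdmissibleDecomp M Δ₁) (hN : HasAdmissibleDecomp N Δ₂) :
    HasAdmissibleDecomp ((matrix M N).submatrix (rowEquiv m n).symm (colEquiv m n).symm)
      (-(Δ₂ * Δ₁)) := by
  obtain ⟨U₁, T₁, hU₁, hU₁_unit, hU₁_last, hT₁, hT₁_one, hT₁_last, hUM⟩ := hM
  obtain ⟨U₂, T₂, hU₂, hU₂_unit, hU₂_last, hT₂, hT₂_one, hT₂_last, hUN⟩ := hN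
  simp only [add_tsub_cancel_right] at hU₁_last hT₁_one hT₁_last hU₂_last hT₂_one hT₂_last
  have hprod : lowerFactor U₁ U₂ Δ₂ * matrix M N = upperFactor T₁ T₂ Δ₁ Δ₂ :=
    lowerFactor_mul_matrix hU₁ (hU₁_last _ rfl) hT₁ (hT₁_last _ rfl) hUM hUN
  refine hasAdmissibleDecomp_submatrix _ _ (lowerFactor U₁ U₂ Δ₂)
    (lowerFactor_eq_zero_of_lt hU₁ hU₂) (isUnit_lowerFactor_apply_self hU₁_unit hU₂_unit)
    (lowerFactor_apply_self_of_last (hU₂_last _ rfl)) ?_ ?_ ?_ <;> rw [hprod]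
  exacts [upperFactor_eq_zero_of_lt hT₁ hT₂ (hT₂_last _ rfl),
    upperFactor_eq_one hT₁_one hT₂_one, upperFactor_apply_of_last]

end PivotProduct

/-- Closure of the set of pivots under products: if `M` (size `k`) has pivot `Δ₁`
and `N` (size `l`) has pivot `Δ₂`, both with entries in `V`, then there is a
`(k+l)×(k+l)` matrix with entries in `V` with pivot `-Δ₂ * Δ₁`. -/
theorem pivot_product_closure {A : Type*} [Ring A] [Algebra ℂ A]
    (V : Submodule ℂ A) (hV1 : (1 : A) ∈ V)
    (k l : ℕ) (hk : 1 ≤ k) (hl : 1 ≤ l)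
    (M : Matrix (Fin k) (Fin k) A) (hMV : ∀ i j, M i j ∈ V)
    (N : Matrix (Fin l) (Fin l) A) (hNV : ∀ i j, N i j ∈ V)
    (Δ₁ Δ₂ : A) (hM : HasAdmissibleDecomp M Δ₁) (hN : HasAdmissibleDecomp N Δ₂) :
    ∃ P : Matrix (Fin (k + l)) (Fin (k + l)) A,
      (∀ i j, P i j ∈ V) ∧ HasAdmissibleDecomp P (-(Δ₂ * Δ₁)) := by
  obtain ⟨m, rfl⟩ : ∃ m, k = m + 1 := ⟨k - 1, by omega⟩
  obtain ⟨n, rfl⟩ : ∃ n, l = n + 1 := ⟨l - 1, by omega⟩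
  exact ⟨_, fun _ _ => PivotProduct.matrix_apply_mem hV1 hMV hNV _ _,
    PivotProduct.hasAdmissibleDecomp hM hN⟩
end

section
/- (Closure of the set of pivots under sums.) Let A be an associative unital ℂ-algebra and V ⊆ A a ℂ-linear subspace with 1 ∈ V. Suppose M is a k×k matrix with entries in V admitting an admissible decomposition with pivot Δ₁, and N is an l×l matrix with entries in V admitting an admissible decomposition with pivot Δ₂. Then there exists a (k+l)×(k+l) matrix P with all entries in V admitting an admissible decomposition with pivot Δ₁ + Δ₂. -/
open Matrix Finset




section Emb
variable {A : Type*} [Ring A]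

/-- Embed an `n×n` matrix into an `m×m` matrix along a map `f`, with zeros elsewhere. -/
noncomputable def embMat {n m : ℕ} (f : Fin n → Fin m) (X : Matrix (Fin n) (Fin n) A) :
    Matrix (Fin m) (Fin m) A :=
  Matrix.of fun p q =>
    if h : (∃ i, f i = p) ∧ (∃ j, f j = q) then X h.1.choose h.2.choose else 0

lemma embMat_apply {n m : ℕ} {f : Fin n → Fin m} (hf : Function.Injective f)
    (X : Matrix (Fin n) (Fin n) A) (i j : Fin n) :
    embMat f X (f i) (f j) = X i j := by
  have h : (∃ a, f a = f i) ∧ (∃ b, f b = f j) := ⟨⟨i, rfl⟩, ⟨j, rfl⟩⟩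
  simp only [embMat, Matrix.of_apply, dif_pos h]
  rw [hf h.1.choose_spec, hf h.2.choose_spec]

lemma embMat_apply' {n m : ℕ} {f : Fin n → Fin m} (hf : Function.Injective f)
    (X : Matrix (Fin n) (Fin n) A) {i j : Fin n} {p q : Fin m}
    (hi : f i = p) (hj : f j = q) : embMat f X p q = X i j := by
  subst hi; subst hj; exact embMat_apply hf X i j

lemma embMat_zero_left {n m : ℕ} {f : Fin n → Fin m} {p : Fin m}
    (X : Matrix (Fin n) (Fin n) A) (h : ∀ i, f i ≠ p) (q : Fin m) :
    embMat f X p q = 0 := by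
  simp only [embMat, Matrix.of_apply]
  rw [dif_neg]
  rintro ⟨⟨i, hi⟩, -⟩
  exact h i hi

lemma embMat_zero_right {n m : ℕ} {f : Fin n → Fin m} {q : Fin m}
    (X : Matrix (Fin n) (Fin n) A) (h : ∀ j, f j ≠ q) (p : Fin m) :
    embMat f X p q = 0 := by
  simp only [embMat, Matrix.of_apply]
  rw [dif_neg]
  rintro ⟨-, ⟨j, hj⟩⟩
  exact h j hj

lemma embMat_prop {n m : ℕ} (f : Fin n → Fin m) (X : Matrix (Fin n) (Fin n) A)
    (S : A → Prop) (h0 : S 0) (hX : ∀ i j, S (X i j)) (p q : Fin m) :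
    S (embMat f X p q) := by
  simp only [embMat, Matrix.of_apply]
  split
  · exact hX _ _
  · exact h0

lemma embMat_mul {n m : ℕ} {f : Fin n → Fin m} (hf : Function.Injective f)
    (X Y : Matrix (Fin n) (Fin n) A) :
    embMat f X * embMat f Y = embMat f (X * Y) := by
  ext p q
  rw [Matrix.mul_apply]
  by_cases hp : ∃ i, f i = p
  · by_cases hq : ∃ j, f j = q
    · obtain ⟨i, rfl⟩ := hp
      obtain ⟨j, rfl⟩ := hq
      rw [embMat_apply hf, Matrix.mul_apply]
      have h0 : ∀ r ∈ (univ : Finset (Fin m)), r ∉ univ.image f →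
          embMat f X (f i) r * embMat f Y r (f j) = 0 := by
        intro r _ hr
        have hnr : ∀ a, f a ≠ r := by
          intro a ha
          exact hr (Finset.mem_image.2 ⟨a, Finset.mem_univ a, ha⟩)
        rw [embMat_zero_left Y hnr, mul_zero]
      rw [← Finset.sum_subset (Finset.subset_univ _) h0,
        Finset.sum_image (fun a _ b _ h => hf h)]
      exact Finset.sum_congr rfl fun r _ => by
        rw [embMat_apply hf, embMat_apply hf]
    · rw [embMat_zero_right (X * Y) (fun j hj => hq ⟨j, hj⟩)]
      exact Finset.sum_eq_zero fun r _ => by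
        rw [embMat_zero_right Y (fun j hj => hq ⟨j, hj⟩), mul_zero]
  · rw [embMat_zero_left (X * Y) (fun i hi => hp ⟨i, hi⟩)]
    exact Finset.sum_eq_zero fun r _ => by
      rw [embMat_zero_left X (fun i hi => hp ⟨i, hi⟩), zero_mul]

lemma embMat_mul_cross {n n' m : ℕ} {f : Fin n → Fin m} {g : Fin n' → Fin m}
    (t : Fin m) (hover : ∀ i j, f i = g j → f i = t)
    (X : Matrix (Fin n) (Fin n) A) (Y : Matrix (Fin n') (Fin n') A) (p q : Fin m) :
    (embMat f X * embMat g Y) p q = embMat f X p t * embMat g Y t q := by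
  rw [Matrix.mul_apply]
  apply Finset.sum_eq_single
  · intro r _ hr
    by_cases h1 : ∃ i, f i = r
    · by_cases h2 : ∃ j, g j = r
      · obtain ⟨i, hi⟩ := h1
        obtain ⟨j, hj⟩ := h2
        exact absurd (hi ▸ hover i j (hi.trans hj.symm)) hr
      · rw [embMat_zero_left Y (fun j hj => h2 ⟨j, hj⟩), mul_zero]
    · rw [embMat_zero_right X (fun i hi => h1 ⟨i, hi⟩), zero_mul]
  · intro h
    exact absurd (Finset.mem_univ t) h

end Emb

def fMap (k l : ℕ) : Fin k → Fin (k + l) := fun i =>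
  if (i : ℕ) = k - 1 then ⟨k + l - 1, by have := i.isLt; omega⟩
  else ⟨(i : ℕ), by have := i.isLt; omega⟩

def fNap (k l : ℕ) : Fin l → Fin (k + l) := fun j =>
  if (j : ℕ) = l - 1 then ⟨k + l - 1, by have := j.isLt; omega⟩
  else ⟨k + (j : ℕ), by have := j.isLt; omega⟩

lemma fMap_val (k l : ℕ) (i : Fin k) :
    ((fMap k l i : Fin (k + l)) : ℕ) = if (i : ℕ) = k - 1 then k + l - 1 else (i : ℕ) := by
  simp only [fMap, apply_ite Fin.val]

lemma fNap_val (k l : ℕ) (j : Fin l) :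
    ((fNap k l j : Fin (k + l)) : ℕ) = if (j : ℕ) = l - 1 then k + l - 1 else k + (j : ℕ) := by
  simp only [fNap, apply_ite Fin.val]

lemma fMap_inj (k l : ℕ) : Function.Injective (fMap k l) := by
  intro a b h
  have h' := congrArg Fin.val h
  rw [fMap_val, fMap_val] at h'
  apply Fin.ext
  split_ifs at h' <;> omega

lemma fNap_inj (k l : ℕ) : Function.Injective (fNap k l) := by
  intro a b h
  have h' := congrArg Fin.val h
  rw [fNap_val, fNap_val] at h'
  apply Fin.ext
  split_ifs at h' <;> omega

lemma fMap_mono (k l : ℕ) (i j : Fin k)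
    (h : ((fMap k l i : Fin (k+l)) : ℕ) < ((fMap k l j : Fin (k+l)) : ℕ)) :
    (i : ℕ) < (j : ℕ) := by
  rw [fMap_val, fMap_val] at h
  split_ifs at h <;> omega

lemma fNap_mono (k l : ℕ) (i j : Fin l)
    (h : ((fNap k l i : Fin (k+l)) : ℕ) < ((fNap k l j : Fin (k+l)) : ℕ)) :
    (i : ℕ) < (j : ℕ) := by
  rw [fNap_val, fNap_val] at h
  split_ifs at h <;> omega

lemma fMap_over (k l : ℕ) (i : Fin k) (j : Fin l)
    (h : fMap k l i = fNap k l j) : ((fMap k l i : Fin (k+l)) : ℕ) = k + l - 1 := by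
  have h' := congrArg Fin.val h
  rw [fMap_val, fNap_val] at h'
  rw [fMap_val]
  split_ifs at h' ⊢ <;> omega

def cornerE (A : Type*) [Ring A] (k l : ℕ) : Matrix (Fin (k + l)) (Fin (k + l)) A :=
  Matrix.of fun p q => if (p : ℕ) = k - 1 ∧ (q : ℕ) = k - 1 then (1 : A) else 0

lemma cornerE_apply (A : Type*) [Ring A] (k l : ℕ) (p q : Fin (k + l)) :
    cornerE A k l p q = if (p : ℕ) = k - 1 ∧ (q : ℕ) = k - 1 then (1 : A) else 0 := rfl

def zeroLast {A : Type*} [Ring A] {l : ℕ} (U : Matrix (Fin l) (Fin l) A) :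
    Matrix (Fin l) (Fin l) A :=
  Matrix.of fun i j => if (i : ℕ) = l - 1 ∧ (j : ℕ) = l - 1 then (0 : A) else U i j

lemma zeroLast_apply {A : Type*} [Ring A] {l : ℕ} (U : Matrix (Fin l) (Fin l) A)
    (i j : Fin l) :
    zeroLast U i j = if (i : ℕ) = l - 1 ∧ (j : ℕ) = l - 1 then (0 : A) else U i j := rfl

set_option maxHeartbeats 1000000 in
/-- Closure of the set of pivots under sums: if `M` (size `k`) has pivot `Δ₁`
and `N` (size `l`) has pivot `Δ₂`, both with entries in `V`, then there is a
`(k+l)×(k+l)` matrix with entries in `V` with pivot `Δ₁ + Δ₂`. -/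
theorem pivot_sum_closure {A : Type*} [Ring A] [Algebra ℂ A]
    (V : Submodule ℂ A) (hV1 : (1 : A) ∈ V)
    (k l : ℕ) (hk : 1 ≤ k) (hl : 1 ≤ l)
    (M : Matrix (Fin k) (Fin k) A) (hMV : ∀ i j, M i j ∈ V)
    (N : Matrix (Fin l) (Fin l) A) (hNV : ∀ i j, N i j ∈ V)
    (Δ₁ Δ₂ : A) (hM : HasAdmissibleDecomp M Δ₁) (hN : HasAdmissibleDecomp N Δ₂) :
    ∃ P : Matrix (Fin (k + l)) (Fin (k + l)) A,
      (∀ i j, P i j ∈ V) ∧ HasAdmissibleDecomp P (Δ₁ + Δ₂) := by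

  obtain ⟨U₁, T₁, hU₁low, hU₁unit, hU₁last, hT₁up, hT₁diag, hT₁last, hUM⟩ := hM
  obtain ⟨U₂, T₂, hU₂low, hU₂unit, hU₂last, hT₂up, hT₂diag, hT₂last, hUN⟩ := hN
  have htop : k + l - 1 < k + l := by omega
  have hkm1 : k - 1 < k + l := by omega
  have hlm1 : l - 1 < l := by omega
  have hkk : k - 1 < k := by omega
  have hover : ∀ (i : Fin k) (j : Fin l), fMap k l i = fNap k l j →
      fMap k l i = ⟨k + l - 1, htop⟩ :=
    fun i j h => Fin.ext (fMap_over k l i j h)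
  have hover' : ∀ (j : Fin l) (i : Fin k), fNap k l j = fMap k l i →
      fNap k l j = ⟨k + l - 1, htop⟩ :=
    fun j i h => h.trans (Fin.ext (fMap_over k l i j h.symm))
  have hfMtop : fMap k l ⟨k - 1, hkk⟩ = ⟨k + l - 1, htop⟩ := by
    apply Fin.ext
    rw [fMap_val]
    simp
  have hfNtop : fNap k l ⟨l - 1, hlm1⟩ = ⟨k + l - 1, htop⟩ := by
    apply Fin.ext
    rw [fNap_val]
    simp
  have hnotM : ∀ p : Fin (k + l), k - 1 ≤ (p : ℕ) → (p : ℕ) ≠ k + l - 1 →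
      ∀ i, fMap k l i ≠ p := by
    intro p h1 h2 i hip
    have h' := congrArg Fin.val hip
    rw [fMap_val] at h'
    have := i.isLt
    split_ifs at h' <;> omega
  have hnotN : ∀ p : Fin (k + l), (p : ℕ) < k → ∀ j, fNap k l j ≠ p := by
    intro p h1 j hjp
    have h' := congrArg Fin.val hjp
    rw [fNap_val] at h'
    split_ifs at h' <;> omega
  refine ⟨embMat (fMap k l) M + embMat (fNap k l) N + cornerE A k l, ?_,
    embMat (fMap k l) U₁ + embMat (fNap k l) (zeroLast U₂) + cornerE A k l,
    embMat (fMap k l) T₁ + embMat (fNap k l) T₂ + cornerE A k l,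
    ?_, ?_, ?_, ?_, ?_, ?_, ?_⟩
  · -- entries in V
    intro p q
    simp only [Matrix.add_apply]
    refine add_mem (add_mem ?_ ?_) ?_
    · exact embMat_prop _ M (· ∈ V) (zero_mem V) hMV p q
    · exact embMat_prop _ N (· ∈ V) (zero_mem V) hNV p q
    · rw [cornerE_apply]
      split
      · exact hV1
      · exact zero_mem V
  · -- U lower triangular
    intro p q hpq
    simp only [Matrix.add_apply]
    have e1 : embMat (fMap k l) U₁ p q = 0 := by
      by_cases hp : ∃ i, fMap k l i = p
      · by_cases hq : ∃ j, fMap k l j = q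
        · obtain ⟨i, rfl⟩ := hp
          obtain ⟨j, rfl⟩ := hq
          rw [embMat_apply (fMap_inj k l)]
          exact hU₁low i j (fMap_mono k l i j hpq)
        · exact embMat_zero_right _ (fun j hj => hq ⟨j, hj⟩) p
      · exact embMat_zero_left _ (fun i hi => hp ⟨i, hi⟩) q
    have e2 : embMat (fNap k l) (zeroLast U₂) p q = 0 := by
      by_cases hp : ∃ i, fNap k l i = p
      · by_cases hq : ∃ j, fNap k l j = q
        · obtain ⟨i, rfl⟩ := hp
          obtain ⟨j, rfl⟩ := hq
          rw [embMat_apply (fNap_inj k l), zeroLast_apply]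
          split
          · rfl
          · exact hU₂low i j (fNap_mono k l i j hpq)
        · exact embMat_zero_right _ (fun j hj => hq ⟨j, hj⟩) p
      · exact embMat_zero_left _ (fun i hi => hp ⟨i, hi⟩) q
    have e3 : cornerE A k l p q = 0 := by
      rw [cornerE_apply, if_neg]
      rintro ⟨h1, h2⟩
      omega
    rw [e1, e2, e3, add_zero, add_zero]
  · -- U diagonal units
    intro p
    simp only [Matrix.add_apply]
    by_cases hp1 : (p : ℕ) < k - 1
    · have hp' : fMap k l ⟨(p : ℕ), by omega⟩ = p := by
        apply Fin.ext
        rw [fMap_val]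
        exact if_neg (show ¬((p : ℕ) = k - 1) by omega)
      have e1 : embMat (fMap k l) U₁ p p = U₁ ⟨(p : ℕ), by omega⟩ ⟨(p : ℕ), by omega⟩ :=
        embMat_apply' (fMap_inj k l) U₁ hp' hp'
      have e2 : embMat (fNap k l) (zeroLast U₂) p p = 0 :=
        embMat_zero_left _ (hnotN p (by omega)) p
      have e3 : cornerE A k l p p = 0 := by
        rw [cornerE_apply, if_neg]; rintro ⟨h1, -⟩; omega
      rw [e1, e2, e3, add_zero, add_zero]
      exact hU₁unit _
    · by_cases hp2 : (p : ℕ) = k - 1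
      · have e1 : embMat (fMap k l) U₁ p p = 0 :=
          embMat_zero_left _ (hnotM p (by omega) (by omega)) p
        have e2 : embMat (fNap k l) (zeroLast U₂) p p = 0 :=
          embMat_zero_left _ (hnotN p (by omega)) p
        have e3 : cornerE A k l p p = 1 := by
          rw [cornerE_apply, if_pos ⟨hp2, hp2⟩]
        rw [e1, e2, e3, zero_add, zero_add]
        exact isUnit_one
      · by_cases hp3 : (p : ℕ) = k + l - 1
        · have hpt : p = ⟨k + l - 1, htop⟩ := Fin.ext hp3
          have e1 : embMat (fMap k l) U₁ p p = 1 := by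
            rw [embMat_apply' (fMap_inj k l) U₁ (hfMtop.trans hpt.symm)
              (hfMtop.trans hpt.symm)]
            exact hU₁last _ rfl
          have e2 : embMat (fNap k l) (zeroLast U₂) p p = 0 := by
            rw [embMat_apply' (fNap_inj k l) (zeroLast U₂) (hfNtop.trans hpt.symm)
              (hfNtop.trans hpt.symm), zeroLast_apply, if_pos ⟨rfl, rfl⟩]
          have e3 : cornerE A k l p p = 0 := by
            rw [cornerE_apply, if_neg]; rintro ⟨h1, -⟩; omega
          rw [e1, e2, e3, add_zero, add_zero]
          exact isUnit_one
        · have hp' : fNap k l ⟨(p : ℕ) - k, by omega⟩ = p := by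
            apply Fin.ext
            rw [fNap_val]
            rw [if_neg (by simp only []; omega)]
            simp only []
            omega
          have e2 : embMat (fNap k l) (zeroLast U₂) p p
              = zeroLast U₂ ⟨(p : ℕ) - k, by omega⟩ ⟨(p : ℕ) - k, by omega⟩ :=
            embMat_apply' (fNap_inj k l) (zeroLast U₂) hp' hp'
          have e1 : embMat (fMap k l) U₁ p p = 0 :=
            embMat_zero_left _ (hnotM p (by omega) (by omega)) p
          have e3 : cornerE A k l p p = 0 := by
            rw [cornerE_apply, if_neg]; rintro ⟨h1, -⟩; omega
          rw [e1, e2, e3, zero_add, add_zero, zeroLast_apply,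
            if_neg (by rintro ⟨h1, -⟩; simp only [] at h1; omega)]
          exact hU₂unit _
  · -- U last diagonal entry is 1
    intro p hp3
    have hpt : p = ⟨k + l - 1, htop⟩ := Fin.ext hp3
    simp only [Matrix.add_apply]
    have e1 : embMat (fMap k l) U₁ p p = 1 := by
      rw [embMat_apply' (fMap_inj k l) U₁ (hfMtop.trans hpt.symm) (hfMtop.trans hpt.symm)]
      exact hU₁last _ rfl
    have e2 : embMat (fNap k l) (zeroLast U₂) p p = 0 := by
      rw [embMat_apply' (fNap_inj k l) (zeroLast U₂) (hfNtop.trans hpt.symm)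
        (hfNtop.trans hpt.symm), zeroLast_apply, if_pos ⟨rfl, rfl⟩]
    have e3 : cornerE A k l p p = 0 := by
      rw [cornerE_apply, if_neg]; rintro ⟨h1, -⟩; omega
    rw [e1, e2, e3, add_zero, add_zero]
  · -- T upper triangular
    intro p q hpq
    simp only [Matrix.add_apply]
    have e1 : embMat (fMap k l) T₁ p q = 0 := by
      by_cases hp : ∃ i, fMap k l i = p
      · by_cases hq : ∃ j, fMap k l j = q
        · obtain ⟨i, rfl⟩ := hp
          obtain ⟨j, rfl⟩ := hq
          rw [embMat_apply (fMap_inj k l)]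
          exact hT₁up i j (fMap_mono k l j i hpq)
        · exact embMat_zero_right _ (fun j hj => hq ⟨j, hj⟩) p
      · exact embMat_zero_left _ (fun i hi => hp ⟨i, hi⟩) q
    have e2 : embMat (fNap k l) T₂ p q = 0 := by
      by_cases hp : ∃ i, fNap k l i = p
      · by_cases hq : ∃ j, fNap k l j = q
        · obtain ⟨i, rfl⟩ := hp
          obtain ⟨j, rfl⟩ := hq
          rw [embMat_apply (fNap_inj k l)]
          exact hT₂up i j (fNap_mono k l j i hpq)
        · exact embMat_zero_right _ (fun j hj => hq ⟨j, hj⟩) p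
      · exact embMat_zero_left _ (fun i hi => hp ⟨i, hi⟩) q
    have e3 : cornerE A k l p q = 0 := by
      rw [cornerE_apply, if_neg]; rintro ⟨h1, h2⟩; omega
    rw [e1, e2, e3, add_zero, add_zero]
  · -- T diagonal entries 1 below the last
    intro p hp
    simp only [Matrix.add_apply]
    by_cases hp1 : (p : ℕ) < k - 1
    · have hp' : fMap k l ⟨(p : ℕ), by omega⟩ = p := by
        apply Fin.ext
        rw [fMap_val]
        exact if_neg (show ¬((p : ℕ) = k - 1) by omega)
      have e1 : embMat (fMap k l) T₁ p p = T₁ ⟨(p : ℕ), by omega⟩ ⟨(p : ℕ), by omega⟩ :=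
        embMat_apply' (fMap_inj k l) T₁ hp' hp'
      have e2 : embMat (fNap k l) T₂ p p = 0 :=
        embMat_zero_left _ (hnotN p (by omega)) p
      have e3 : cornerE A k l p p = 0 := by
        rw [cornerE_apply, if_neg]; rintro ⟨h1, -⟩; omega
      rw [e1, e2, e3, add_zero, add_zero]
      exact hT₁diag _ hp1
    · by_cases hp2 : (p : ℕ) = k - 1
      · have e1 : embMat (fMap k l) T₁ p p = 0 :=
          embMat_zero_left _ (hnotM p (by omega) (by omega)) p
        have e2 : embMat (fNap k l) T₂ p p = 0 :=
          embMat_zero_left _ (hnotN p (by omega)) p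
        have e3 : cornerE A k l p p = 1 := by
          rw [cornerE_apply, if_pos ⟨hp2, hp2⟩]
        rw [e1, e2, e3, zero_add, zero_add]
      · have hp' : fNap k l ⟨(p : ℕ) - k, by omega⟩ = p := by
          apply Fin.ext
          rw [fNap_val]
          rw [if_neg (by simp only []; omega)]
          simp only []
          omega
        have e2 : embMat (fNap k l) T₂ p p
            = T₂ ⟨(p : ℕ) - k, by omega⟩ ⟨(p : ℕ) - k, by omega⟩ :=
          embMat_apply' (fNap_inj k l) T₂ hp' hp'
        have e1 : embMat (fMap k l) T₁ p p = 0 :=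
          embMat_zero_left _ (hnotM p (by omega) (by omega)) p
        have e3 : cornerE A k l p p = 0 := by
          rw [cornerE_apply, if_neg]; rintro ⟨h1, -⟩; omega
        rw [e1, e2, e3, zero_add, add_zero]
        exact hT₂diag _ (by simp only []; omega)
  · -- T last diagonal entry is Δ₁ + Δ₂
    intro p hp3
    have hpt : p = ⟨k + l - 1, htop⟩ := Fin.ext hp3
    simp only [Matrix.add_apply]
    have e1 : embMat (fMap k l) T₁ p p = Δ₁ := by
      rw [embMat_apply' (fMap_inj k l) T₁ (hfMtop.trans hpt.symm) (hfMtop.trans hpt.symm)]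
      exact hT₁last _ rfl
    have e2 : embMat (fNap k l) T₂ p p = Δ₂ := by
      rw [embMat_apply' (fNap_inj k l) T₂ (hfNtop.trans hpt.symm) (hfNtop.trans hpt.symm)]
      exact hT₂last _ rfl
    have e3 : cornerE A k l p p = 0 := by
      rw [cornerE_apply, if_neg]; rintro ⟨h1, -⟩; omega
    rw [e1, e2, e3, add_zero]
  · -- U * P = T
    have h11 : embMat (fMap k l) U₁ * embMat (fMap k l) M = embMat (fMap k l) T₁ := by
      rw [embMat_mul (fMap_inj k l), hUM]
    have h22 : embMat (fNap k l) (zeroLast U₂) * embMat (fNap k l) N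
        = embMat (fNap k l) (zeroLast U₂ * N) :=
      embMat_mul (fNap_inj k l) _ _
    have hU₂'t : ∀ p, embMat (fNap k l) (zeroLast U₂) p ⟨k + l - 1, htop⟩ = 0 := by
      intro p
      by_cases hp : ∃ j, fNap k l j = p
      · obtain ⟨j, rfl⟩ := hp
        rw [embMat_apply' (fNap_inj k l) (zeroLast U₂) rfl hfNtop, zeroLast_apply]
        by_cases hj : (j : ℕ) = l - 1
        · rw [if_pos ⟨hj, rfl⟩]
        · rw [if_neg (by rintro ⟨h1, -⟩; exact hj h1)]
          exact hU₂low _ _ (by simp only []; have := j.isLt; omega)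
      · exact embMat_zero_left _ (fun j hj => hp ⟨j, hj⟩) _
    have h21 : embMat (fNap k l) (zeroLast U₂) * embMat (fMap k l) M = 0 := by
      ext p q
      rw [embMat_mul_cross ⟨k + l - 1, htop⟩ hover', hU₂'t, zero_mul, Matrix.zero_apply]
    have hA1E : embMat (fMap k l) U₁ * cornerE A k l = 0 := by
      ext p q
      rw [Matrix.mul_apply, Matrix.zero_apply]
      apply Finset.sum_eq_zero
      intro r _
      by_cases hr : (r : ℕ) = k - 1 ∧ (q : ℕ) = k - 1
      · rw [embMat_zero_right _ (hnotM r (by omega) (by omega)) p, zero_mul]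
      · rw [cornerE_apply, if_neg hr, mul_zero]
    have hA2E : embMat (fNap k l) (zeroLast U₂) * cornerE A k l = 0 := by
      ext p q
      rw [Matrix.mul_apply, Matrix.zero_apply]
      apply Finset.sum_eq_zero
      intro r _
      by_cases hr : (r : ℕ) = k - 1 ∧ (q : ℕ) = k - 1
      · rw [embMat_zero_right _ (hnotN r (by omega)) p, zero_mul]
      · rw [cornerE_apply, if_neg hr, mul_zero]
    have hEB1 : cornerE A k l * embMat (fMap k l) M = 0 := by
      ext p q
      rw [Matrix.mul_apply, Matrix.zero_apply]
      apply Finset.sum_eq_zero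
      intro r _
      by_cases hr : (p : ℕ) = k - 1 ∧ (r : ℕ) = k - 1
      · rw [embMat_zero_left _ (hnotM r (by omega) (by omega)) q, mul_zero]
      · rw [cornerE_apply, if_neg hr, zero_mul]
    have hEB2 : cornerE A k l * embMat (fNap k l) N = 0 := by
      ext p q
      rw [Matrix.mul_apply, Matrix.zero_apply]
      apply Finset.sum_eq_zero
      intro r _
      by_cases hr : (p : ℕ) = k - 1 ∧ (r : ℕ) = k - 1
      · rw [embMat_zero_left _ (hnotN r (by omega)) q, mul_zero]
      · rw [cornerE_apply, if_neg hr, zero_mul]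
    have hEE : cornerE A k l * cornerE A k l = cornerE A k l := by
      ext p q
      rw [Matrix.mul_apply]
      rw [Finset.sum_eq_single (⟨k - 1, hkm1⟩ : Fin (k + l))]
      · simp only [cornerE_apply]
        by_cases hp : (p : ℕ) = k - 1 <;> by_cases hq : (q : ℕ) = k - 1 <;>
          simp [hp, hq]
      · intro r _ hr
        have hrv : (r : ℕ) ≠ k - 1 := fun h => hr (Fin.ext h)
        rw [cornerE_apply, if_neg (by rintro ⟨-, h2⟩; exact hrv h2), zero_mul]
      · intro h
        exact absurd (Finset.mem_univ _) h
    have h12 : embMat (fMap k l) U₁ * embMat (fNap k l) N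
        + embMat (fNap k l) (zeroLast U₂ * N) = embMat (fNap k l) T₂ := by
      ext p q
      rw [Matrix.add_apply, embMat_mul_cross ⟨k + l - 1, htop⟩ hover]
      by_cases hq : ∃ j, fNap k l j = q
      · obtain ⟨j, rfl⟩ := hq
        by_cases hp : ∃ i, fNap k l i = p
        · obtain ⟨i, rfl⟩ := hp
          rw [embMat_apply (fNap_inj k l), embMat_apply (fNap_inj k l),
            embMat_apply' (fNap_inj k l) N hfNtop rfl]
          by_cases hi : (i : ℕ) = l - 1
          · have hit : fNap k l i = ⟨k + l - 1, htop⟩ := by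
              apply Fin.ext
              rw [fNap_val, if_pos hi]
            rw [embMat_apply' (fMap_inj k l) U₁ (hfMtop.trans hit.symm) hfMtop,
              hU₁last _ rfl, one_mul]
            rw [← hUN, Matrix.mul_apply, Matrix.mul_apply]
            rw [← Finset.add_sum_erase Finset.univ _
                (Finset.mem_univ (⟨l - 1, hlm1⟩ : Fin l)),
              ← Finset.add_sum_erase Finset.univ (fun r => U₂ i r * N r j)
                (Finset.mem_univ (⟨l - 1, hlm1⟩ : Fin l))]
            have hz : zeroLast U₂ i ⟨l - 1, hlm1⟩ = 0 := by
              rw [zeroLast_apply, if_pos ⟨hi, rfl⟩]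
            have ho : U₂ i ⟨l - 1, hlm1⟩ = 1 := by
              have hieq : i = ⟨l - 1, hlm1⟩ := Fin.ext hi
              rw [hieq]
              exact hU₂last _ rfl
            rw [hz, zero_mul, zero_add, ho, one_mul]
            have hcong : ∀ r ∈ Finset.univ.erase (⟨l - 1, hlm1⟩ : Fin l),
                zeroLast U₂ i r * N r j = U₂ i r * N r j := by
              intro r hr
              have hrne : (r : ℕ) ≠ l - 1 := fun h => (Finset.mem_erase.1 hr).1 (Fin.ext h)
              rw [zeroLast_apply, if_neg (by rintro ⟨-, h2⟩; exact hrne h2)]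
            rw [Finset.sum_congr rfl hcong]
          · have hzero : embMat (fMap k l) U₁ (fNap k l i) ⟨k + l - 1, htop⟩ = 0 := by
              apply embMat_zero_left
              intro a ha
              have hval := fMap_over k l a i ha
              have h2 := congrArg Fin.val ha
              rw [hval] at h2
              rw [fNap_val] at h2
              rw [if_neg hi] at h2
              have := i.isLt
              omega
            rw [hzero, zero_mul, zero_add, ← hUN, Matrix.mul_apply, Matrix.mul_apply]
            apply Finset.sum_congr rfl
            intro r _
            rw [zeroLast_apply, if_neg (by rintro ⟨h1, -⟩; exact hi h1)]
        · have hz1 : embMat (fNap k l) (zeroLast U₂ * N) p (fNap k l j) = 0 :=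
            embMat_zero_left _ (fun a ha => hp ⟨a, ha⟩) _
          have hz2 : embMat (fNap k l) T₂ p (fNap k l j) = 0 :=
            embMat_zero_left _ (fun a ha => hp ⟨a, ha⟩) _
          rw [hz1, hz2, add_zero]
          by_cases hp' : ∃ a, fMap k l a = p
          · obtain ⟨a, rfl⟩ := hp'
            have ha : (a : ℕ) ≠ k - 1 := by
              intro h
              apply hp
              refine ⟨⟨l - 1, hlm1⟩, ?_⟩
              rw [hfNtop, ← hfMtop]
              exact congrArg _ (Fin.ext h.symm)
            rw [embMat_apply' (fMap_inj k l) U₁ rfl hfMtop]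
            rw [hU₁low a ⟨k - 1, hkk⟩ (by simp only []; have := a.isLt; omega), zero_mul]
          · rw [embMat_zero_left _ (fun a ha => hp' ⟨a, ha⟩), zero_mul]
      · have hz1 : embMat (fNap k l) N ⟨k + l - 1, htop⟩ q = 0 :=
          embMat_zero_right _ (fun a ha => hq ⟨a, ha⟩) _
        have hz2 : embMat (fNap k l) (zeroLast U₂ * N) p q = 0 :=
          embMat_zero_right _ (fun a ha => hq ⟨a, ha⟩) _
        have hz3 : embMat (fNap k l) T₂ p q = 0 :=
          embMat_zero_right _ (fun a ha => hq ⟨a, ha⟩) _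
        rw [hz1, hz2, hz3, mul_zero, add_zero]
    have expand : (embMat (fMap k l) U₁ + embMat (fNap k l) (zeroLast U₂) + cornerE A k l)
        * (embMat (fMap k l) M + embMat (fNap k l) N + cornerE A k l)
        = embMat (fMap k l) U₁ * embMat (fMap k l) M
          + (embMat (fMap k l) U₁ * embMat (fNap k l) N
            + embMat (fNap k l) (zeroLast U₂) * embMat (fNap k l) N)
          + (embMat (fNap k l) (zeroLast U₂) * embMat (fMap k l) M
            + embMat (fMap k l) U₁ * cornerE A k l
            + embMat (fNap k l) (zeroLast U₂) * cornerE A k l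
            + cornerE A k l * embMat (fMap k l) M
            + cornerE A k l * embMat (fNap k l) N)
          + cornerE A k l * cornerE A k l := by
      noncomm_ring
    rw [expand, h11, h22, h12, h21, hA1E, hA2E, hEB1, hEB2, hEE]
    simp only [add_zero, zero_add]
end
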